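/- Let |g|<1 and theta, mu in [0, pi]. Define u_plus = 1 + g^2 - 2g*cos(theta+mu) and u_minus = 1 + g^2 - 2g*cos(theta-mu). Then (1/pi) * integral from 0 to pi of ds/sqrt(1 - 2g(cos theta cos mu + sin theta sin mu cos s) + g^2) equals (2/(pi*sqrt(u_plus))) * K0((u_plus - u_minus)/u_plus). -/

import Mathlib

/-!
Writing the integrand as `(A - B cos s)^(-1/2)` with `A = 1 + g² - 2g cos θ cos μ` and
`B = 2g sin θ sin μ`, the substitution `s = π - 2t` together with `cos (π - 2t) = 2 sin² t - 1`
turns `A - B cos s` into `(A + B) (1 - m sin² t)` with `A + B = u₊` and `m = 2B / (A + B)`;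
the identity `u₊ - u₋ = 2B` identifies this modulus with `(u₊ - u₋) / u₊`.
-/

open Real

/-- The complete elliptic integral of the first kind, as a function of the modulus `m`. -/
noncomputable def K0 (m : ℝ) : ℝ :=
  ∫ s in (0:ℝ)..(π/2), 1 / Real.sqrt (1 - m * Real.sin s ^ 2)

lemma integral_zero_pi_eq_two_mul_integral_comp_pi_sub_two_mul (f : ℝ → ℝ) :
    ∫ s in (0:ℝ)..π, f s = 2 * ∫ t in (0:ℝ)..(π/2), f (π - 2 * t) := by
  rw [intervalIntegral.integral_comp_sub_mul f two_ne_zero, mul_div_cancel₀ π two_ne_zero,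
    sub_self, mul_zero, sub_zero, smul_eq_mul, ← mul_assoc, mul_inv_cancel₀ two_ne_zero, one_mul]

lemma sub_mul_cos_pi_sub_two_mul {A B : ℝ} (hA : A + B ≠ 0) (t : ℝ) :
    A - B * cos (π - 2 * t) = (A + B) * (1 - 2 * B / (A + B) * sin t ^ 2) := by
  rw [cos_pi_sub, cos_two_mul, cos_sq']
  field_simp
  ring

lemma integral_inv_sqrt_sub_mul_cos {A B : ℝ} (hA : 0 < A + B) :
    ∫ s in (0:ℝ)..π, 1 / √(A - B * cos s) = 2 / √(A + B) * K0 (2 * B / (A + B)) := by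
  have hsqrt : ∀ t, 1 / √(A - B * cos (π - 2 * t))
      = (√(A + B))⁻¹ * (1 / √(1 - 2 * B / (A + B) * sin t ^ 2)) := fun t => by
    rw [sub_mul_cos_pi_sub_two_mul hA.ne', sqrt_mul hA.le, one_div, one_div, mul_inv]
  rw [integral_zero_pi_eq_two_mul_integral_comp_pi_sub_two_mul, funext hsqrt,
    intervalIntegral.integral_const_mul, K0]
  ring

lemma one_add_sq_sub_two_mul_mul_cos_pos {g : ℝ} (hg : |g| < 1) (x : ℝ) :
    0 < 1 + g ^ 2 - 2 * g * cos x := by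
  obtain ⟨hg₁, hg₂⟩ := abs_lt.mp hg
  rcases le_or_gt 0 g with h | h
  · nlinarith [cos_le_one x]
  · nlinarith [neg_one_le_cos x]

theorem H0_elliptic_integral_form_general (g θ μ : ℝ) (hg : |g| < 1) :
    (1/π) * ∫ s in (0:ℝ)..π,
        1 / Real.sqrt (1 - 2*g*(Real.cos θ * Real.cos μ + Real.sin θ * Real.sin μ * Real.cos s) + g^2)
      = (2 / (π * Real.sqrt (1 + g^2 - 2*g*Real.cos (θ + μ))))
          * K0 (((1 + g^2 - 2*g*Real.cos (θ + μ)) - (1 + g^2 - 2*g*Real.cos (θ - μ)))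
              / (1 + g^2 - 2*g*Real.cos (θ + μ))) := by
  set A := 1 - 2 * g * (cos θ * cos μ) + g ^ 2
  set B := 2 * g * (sin θ * sin μ)
  have hAB : A + B = 1 + g ^ 2 - 2 * g * cos (θ + μ) := by
    rw [cos_add]; ring
  have hdiff : (1 + g ^ 2 - 2 * g * cos (θ + μ)) - (1 + g ^ 2 - 2 * g * cos (θ - μ)) = 2 * B := by
    rw [cos_add, cos_sub]; ring
  have hintegrand : ∀ s, 1 - 2 * g * (cos θ * cos μ + sin θ * sin μ * cos s) + g ^ 2
      = A - B * cos s := fun s => by ring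
  rw [funext fun s => congrArg (fun x => 1 / √x) (hintegrand s),
    integral_inv_sqrt_sub_mul_cos (hAB ▸ one_add_sq_sub_two_mul_mul_cos_pos hg _), hAB, hdiff]
  ring

theorem H0_elliptic_integral_form (g θ μ : ℝ) (hg : |g| < 1)
    (hθ : θ ∈ Set.Icc 0 π) (hμ : μ ∈ Set.Icc 0 π) :
    (1/π) * ∫ s in (0:ℝ)..π,
        1 / Real.sqrt (1 - 2*g*(Real.cos θ * Real.cos μ + Real.sin θ * Real.sin μ * Real.cos s) + g^2)
      = (2 / (π * Real.sqrt (1 + g^2 - 2*g*Real.cos (θ + μ))))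
          * K0 (((1 + g^2 - 2*g*Real.cos (θ + μ)) - (1 + g^2 - 2*g*Real.cos (θ - μ)))
              / (1 + g^2 - 2*g*Real.cos (θ + μ))) :=
  H0_elliptic_integral_form_general g θ μ hg
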